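/- Let q ≥ 2 and f be strongly q-multiplicative with |f| = 1. Define c(f) = -log(max_t |F₁(t)F₁(qt)|)/(2 log q) and η(f) = (1/log q) log(max_{0≤t≤1} Σ_{0≤r<q} |F₁(qt+r)|), where F₁(t) = q^{-1} Σ_{0≤u<q} f(u) e(-tu/q). Then c(f) ≤ η(f). -/

import Mathlib

/-- `F₁(t) = q^{-1} Σ_{0≤u<q} f(u) e(-tu/q)`. -/
noncomputable def F1 (q : ℕ) (f : ℕ → ℂ) (t : ℝ) : ℂ :=
  (1 / (q : ℂ)) * ∑ u ∈ Finset.range q,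
    f u * Complex.exp (2 * Real.pi * Complex.I * (-(t * u) / (q : ℝ)))

/-!
`F1 (q ^ 2) f` is the paper's `F₂`. Strong `q`-multiplicativity factorises it as
`F₂(t) = F₁(t) F₁(t/q)`, and Parseval gives `Σ_{h<q²} |F₂(h)|² = 1`. Each `|F₂(h)|` equals
`|F₁(h/q) F₁(q · h/q)| ≤ M := max_t |F₁(t) F₁(qt)|`, while writing `h = aq + b` and using the
`q`-periodicity of `F₁` gives `Σ_{h<q²} |F₂(h)| = Σ_b |F₁(b)| Σ_a |F₁(q · b/q² + a)| ≤ S²`, where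
`S` is the maximum defining `η(f)`. Hence `1 ≤ M S²`, which is `c(f) ≤ η(f)` after taking logarithms.
-/

open Finset Complex
open scoped Real ComplexConjugate

lemma sum_range_mul_eq_sum_sum {M : Type*} [AddCommMonoid M] (G : ℕ → M) (m n : ℕ) :
    ∑ u ∈ range (m * n), G u = ∑ a ∈ range m, ∑ b ∈ range n, G (a * n + b) := by
  induction m with
  | zero => simp
  | succ m ih => rw [add_mul, one_mul, sum_range_add, ih, sum_range_succ]

lemma sum_range_exp_two_pi_I_mul (N : ℕ) [NeZero N] (k : ℤ) :
    ∑ h ∈ range N, exp (2 * π * I * (k * h / N)) = if (N : ℤ) ∣ k then (N : ℂ) else 0 := by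
  set ζ := exp (2 * π * I / N)
  have hζ : IsPrimitiveRoot ζ N := isPrimitiveRoot_exp N (NeZero.ne N)
  have hterm : ∀ h : ℕ, exp (2 * π * I * (k * h / N)) = (ζ ^ k) ^ h := by
    intro h
    rw [← zpow_natCast, ← zpow_mul, ← exp_int_mul]
    push_cast
    ring_nf
  simp_rw [hterm]
  split_ifs with hk
  · simp [(hζ.zpow_eq_one_iff_dvd k).mpr hk]
  · have hN : (ζ ^ k) ^ N = 1 := by
      rw [← zpow_natCast, ← zpow_mul, mul_comm, zpow_mul, zpow_natCast, hζ.pow_eq_one, one_zpow]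
    rw [geom_sum_eq (mt (hζ.zpow_eq_one_iff_dvd k).mp hk), hN, sub_self, zero_div]

lemma natCast_dvd_sub_iff_eq {N u v : ℕ} (hu : u < N) (hv : v < N) :
    (N : ℤ) ∣ (v : ℤ) - u ↔ u = v := by
  rw [← Int.modEq_iff_dvd, Int.natCast_modEq_iff]
  exact ⟨fun h => h.eq_of_lt_of_lt hu hv, fun h => h ▸ rfl⟩

section F1

lemma norm_F1_le_one (N : ℕ) {g : ℕ → ℂ} (hg : ∀ n, ‖g n‖ ≤ 1) (t : ℝ) : ‖F1 N g t‖ ≤ 1 := by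
  rcases N.eq_zero_or_pos with rfl | hN
  · simp [F1]
  rw [F1, norm_mul, norm_div, norm_one, norm_natCast, one_div, inv_mul_le_iff₀ (by positivity),
    mul_one]
  calc _ ≤ ∑ u ∈ range N, (1 : ℝ) := by
        refine (norm_sum_le _ _).trans (sum_le_sum fun u _ => ?_)
        rw [norm_mul, norm_exp]
        simpa using hg u
    _ = N := by simp

lemma F1_add_mul_natCast (N : ℕ) [NeZero N] (g : ℕ → ℂ) (t : ℝ) (k : ℕ) :
    F1 N g (t + N * k) = F1 N g t := by
  have hN : (N : ℂ) ≠ 0 := NeZero.ne _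
  unfold F1
  refine congrArg _ (sum_congr rfl fun u _ => congrArg _ ?_)
  have hshift : 2 * π * I * (-((t + N * k : ℝ) * u) / (N : ℝ))
      = 2 * π * I * (-(t * u) / (N : ℝ)) + ((-(k * u : ℕ) : ℤ) : ℂ) * (2 * π * I) := by
    push_cast
    field_simp
    ring
  rw [hshift, exp_add, exp_int_mul_two_pi_mul_I, mul_one]

lemma F1_mul_conj (N : ℕ) (g : ℕ → ℂ) (h : ℕ) :
    F1 N g h * conj (F1 N g h) = 1 / N ^ 2 * ∑ u ∈ range N, ∑ v ∈ range N,
      g u * conj (g v) * exp (2 * π * I * ((v - u : ℤ) * h / N)) := by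
  simp only [F1, map_mul, map_sum, ← exp_conj, map_div₀, map_one, map_natCast, map_neg, conj_I,
    conj_ofReal, map_ofNat]
  rw [mul_mul_mul_comm, sum_mul_sum]
  congr 1
  · ring
  refine sum_congr rfl fun u _ => sum_congr rfl fun v _ => ?_
  rw [mul_mul_mul_comm, ← exp_add]
  congr 2
  push_cast
  ring

theorem sum_sq_norm_F1 (N : ℕ) [NeZero N] (g : ℕ → ℂ) :
    ∑ h ∈ range N, ‖F1 N g h‖ ^ 2 = (∑ u ∈ range N, ‖g u‖ ^ 2) / N := by
  apply ofReal_injective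
  push_cast
  have hN : (N : ℂ) ≠ 0 := NeZero.ne _
  calc ∑ h ∈ range N, (‖F1 N g h‖ : ℂ) ^ 2
      = 1 / N ^ 2 * ∑ u ∈ range N, ∑ v ∈ range N,
          g u * conj (g v) * ∑ h ∈ range N, exp (2 * π * I * ((v - u : ℤ) * h / N)) := by
        simp_rw [← mul_conj', F1_mul_conj, ← mul_sum]
        rw [sum_comm]
        refine congrArg _ (sum_congr rfl fun u _ => ?_)
        rw [sum_comm]
        simp_rw [mul_sum]
    _ = 1 / N ^ 2 * ∑ u ∈ range N, g u * conj (g u) * N := by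
        congr 1
        refine sum_congr rfl fun u hu => ?_
        rw [sum_eq_single_of_mem u hu, sum_range_exp_two_pi_I_mul, if_pos (by simp)]
        intro v hv hvu
        rw [sum_range_exp_two_pi_I_mul, if_neg, mul_zero]
        rw [natCast_dvd_sub_iff_eq (mem_range.mp hu) (mem_range.mp hv)]
        exact hvu.symm
    _ = (∑ u ∈ range N, (‖g u‖ : ℂ) ^ 2) / N := by
        simp_rw [mul_conj', ← sum_mul]
        field_simp

variable {q : ℕ} {f : ℕ → ℂ}

lemma F1_sq_eq_mul (hfm : ∀ a b : ℕ, b < q → f (a * q + b) = f a * f b) (t : ℝ) :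
    F1 (q ^ 2) f t = F1 q f t * F1 q f (t / q) := by
  rcases q.eq_zero_or_pos with rfl | hq
  · simp [F1]
  have hqC : (q : ℂ) ≠ 0 := by exact_mod_cast hq.ne'
  simp only [F1]
  rw [mul_mul_mul_comm, sum_mul_sum, sq, sum_range_mul_eq_sum_sum]
  congr 1
  · push_cast
    ring
  refine sum_congr rfl fun a _ => sum_congr rfl fun b hb => ?_
  rw [hfm a b (mem_range.mp hb), mul_mul_mul_comm, ← exp_add, ← mul_add]
  congr 2
  push_cast
  field_simp
  ring

lemma norm_F1_sq_mul_eq (hq : 0 < q) (hfm : ∀ a b : ℕ, b < q → f (a * q + b) = f a * f b)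
    (t : ℝ) : ‖F1 (q ^ 2) f (q * t)‖ = ‖F1 q f t * F1 q f (q * t)‖ := by
  rw [F1_sq_eq_mul hfm, mul_div_cancel_left₀ t (by exact_mod_cast hq.ne'), mul_comm]

lemma sum_norm_F1_sq_le (hq : 0 < q) (hfm : ∀ a b : ℕ, b < q → f (a * q + b) = f a * f b)
    {S : ℝ} (hS : ∀ t ∈ Set.Icc (0 : ℝ) 1, ∑ r ∈ range q, ‖F1 q f (q * t + r)‖ ≤ S) :
    ∑ h ∈ range (q ^ 2), ‖F1 (q ^ 2) f h‖ ≤ S ^ 2 := by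
  have : NeZero q := ⟨hq.ne'⟩
  have hS0 : ∑ r ∈ range q, ‖F1 q f r‖ ≤ S := by simpa using hS 0 (by simp)
  have hterm : ∀ a b : ℕ, ‖F1 (q ^ 2) f ((a * q + b : ℕ) : ℝ)‖
      = ‖F1 q f b‖ * ‖F1 q f (q * (b / q ^ 2) + a)‖ := by
    intro a b
    rw [F1_sq_eq_mul hfm, norm_mul]
    congr 2
    · rw [← F1_add_mul_natCast q f b a]
      congr 1
      push_cast
      ring
    · congr 1
      push_cast
      field_simp
      ring
  calc ∑ h ∈ range (q ^ 2), ‖F1 (q ^ 2) f h‖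
      = ∑ a ∈ range q, ∑ b ∈ range q, ‖F1 q f b‖ * ‖F1 q f (q * (b / q ^ 2) + a)‖ := by
        simp_rw [← hterm]
        rw [← sum_range_mul_eq_sum_sum (fun h : ℕ => ‖F1 (q ^ 2) f h‖), ← sq]
    _ = ∑ b ∈ range q, ‖F1 q f b‖ * ∑ a ∈ range q, ‖F1 q f (q * (b / q ^ 2) + a)‖ := by
        rw [sum_comm]
        simp_rw [mul_sum]
    _ ≤ ∑ b ∈ range q, ‖F1 q f b‖ * S := by
        refine sum_le_sum fun b hb => mul_le_mul_of_nonneg_left (hS _ ⟨by positivity, ?_⟩)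
          (norm_nonneg _)
        have hbq : (b : ℝ) ≤ q := by exact_mod_cast (mem_range.mp hb).le
        rw [div_le_one (by positivity)]
        nlinarith [(Nat.one_le_cast (α := ℝ)).mpr hq]
    _ ≤ S ^ 2 := by
        rw [← sum_mul, sq]
        exact mul_le_mul_of_nonneg_right hS0 ((sum_nonneg fun _ _ => norm_nonneg _).trans hS0)

end F1

lemma one_le_mul_of_sum_sq_eq_one {ι : Type*} {s : Finset ι} {x : ι → ℝ} {M T : ℝ}
    (h1 : ∑ i ∈ s, x i ^ 2 = 1) (hx : ∀ i ∈ s, 0 ≤ x i) (hM : ∀ i ∈ s, x i ≤ M)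
    (hT : ∑ i ∈ s, x i ≤ T) : 1 ≤ M * T := by
  obtain ⟨i, hi⟩ : s.Nonempty := nonempty_of_sum_ne_zero (h1 ▸ one_ne_zero)
  calc 1 = ∑ i ∈ s, x i ^ 2 := h1.symm
    _ ≤ ∑ i ∈ s, M * x i := sum_le_sum fun j hj => by
        rw [sq]
        exact mul_le_mul_of_nonneg_right (hM j hj) (hx j hj)
    _ = M * ∑ i ∈ s, x i := (mul_sum _ _ _).symm
    _ ≤ M * T := mul_le_mul_of_nonneg_left hT ((hx i hi).trans (hM i hi))

lemma neg_log_div_two_mul_le {M S L : ℝ} (hL : 0 ≤ L) (h : 1 ≤ M * S ^ 2) :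
    -Real.log M / (2 * L) ≤ 1 / L * Real.log S := by
  have hM : M ≠ 0 := by
    rintro rfl
    linarith
  have hS : S ^ 2 ≠ 0 := by
    intro h0
    rw [h0, mul_zero] at h
    linarith
  have hlog := Real.log_nonneg h
  rw [Real.log_mul hM hS, Real.log_pow, Nat.cast_ofNat] at hlog
  rw [← div_div, one_div_mul_eq_div]
  exact div_le_div_of_nonneg_right (by linarith) hL

/-- For strongly q-multiplicative `f` of modulus 1, with
`c(f) = -log(max_t |F₁(t)F₁(qt)|)/(2 log q)` and
`η(f) = (1/log q) log(max_{0≤t≤1} Σ_{0≤r<q} |F₁(qt+r)|)`, one has `c(f) ≤ η(f)`. -/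
theorem cf_le_etaf (q : ℕ) (hq : 2 ≤ q) (f : ℕ → ℂ)
    (hf1 : ∀ n, ‖f n‖ = 1)
    (hfm : ∀ a b : ℕ, b < q → f (a * q + b) = f a * f b)
    (c η : ℝ)
    (hc : c = -Real.log (sSup (Set.range fun t : ℝ =>
        ‖F1 q f t * F1 q f ((q : ℝ) * t)‖)) / (2 * Real.log q))
    (hη : η = (1 / Real.log q) * Real.log (sSup ((fun t : ℝ =>
        ∑ r ∈ Finset.range q, ‖F1 q f ((q : ℝ) * t + r)‖) '' Set.Icc 0 1))) :
    c ≤ η := by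
  have hq0 : 0 < q := by omega
  have : NeZero q := ⟨hq0.ne'⟩
  have hf : ∀ n, ‖f n‖ ≤ 1 := fun n => (hf1 n).le
  set M := sSup (Set.range fun t : ℝ => ‖F1 q f t * F1 q f ((q : ℝ) * t)‖)
  set S := sSup ((fun t : ℝ => ∑ r ∈ range q, ‖F1 q f ((q : ℝ) * t + r)‖) '' Set.Icc 0 1)
  have hM_bdd : BddAbove (Set.range fun t : ℝ => ‖F1 q f t * F1 q f ((q : ℝ) * t)‖) :=
    ⟨1, Set.forall_mem_range.mpr fun t => by
      rw [norm_mul]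
      exact mul_le_one₀ (norm_F1_le_one q hf t) (norm_nonneg _) (norm_F1_le_one q hf _)⟩
  have hS_bdd : BddAbove
      ((fun t : ℝ => ∑ r ∈ range q, ‖F1 q f ((q : ℝ) * t + r)‖) '' Set.Icc 0 1) :=
    ⟨q, Set.forall_mem_image.mpr fun t _ =>
      (sum_le_sum fun r _ => norm_F1_le_one q hf _).trans (by simp)⟩
  have hParseval : ∑ h ∈ range (q ^ 2), ‖F1 (q ^ 2) f h‖ ^ 2 = 1 := by
    simp [sum_sq_norm_F1, hf1]
  have hM : ∀ h ∈ range (q ^ 2), ‖F1 (q ^ 2) f h‖ ≤ M := fun h _ => by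
    rw [show (h : ℝ) = q * (h / q) by field_simp, norm_F1_sq_mul_eq hq0 hfm]
    exact le_csSup hM_bdd ⟨_, rfl⟩
  have hS := sum_norm_F1_sq_le hq0 hfm fun t ht => le_csSup hS_bdd ⟨t, ht, rfl⟩
  rw [hc, hη]
  exact neg_log_div_two_mul_le (Real.log_natCast_nonneg q)
    (one_le_mul_of_sum_sq_eq_one hParseval (fun _ _ => norm_nonneg _) hM hS)
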